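/- For each j ∈ {x,y,z}, the function p_j ↦ C(p_x,p_y,p_z) = H(p_z) − H((p_o+1)/2) (with the other two coordinates fixed, p_o = sqrt(4(p_x²+p_y²+p_z²−p_x−p_y−p_z)+3)) is nonincreasing on the region where p_j ≤ 1/2 and nondecreasing on the region where p_j ≥ 1/2; in particular, for fixed p_x and p_y, its minimum over admissible p_j is attained at p_j = 1/2. -/

import Mathlib

/-!
In Bloch coordinates `r = 2p - 1` one has `C = (S (r_z²) - S ‖r‖²) / log 2`, where
`S s = h ((1 + √s) / 2)`, with `h` the binary entropy, is the entropy of a qubit with squared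
Bloch radius `s`. Since `S` is antitone on `[0, 1]`, `C` grows with `r_x²` and with `r_y²`.
Moreover `S` is concave: its derivative is `-L(√s) / (4√s)` with `L t = log ((1 + t) / (1 - t))`
convex and `L 0 = 0`, so `L t / t` increases. Hence `s ↦ S s - S (s + a)` is monotone, and `C`
grows with `r_z²` too. Each `r_j²` decreases in `p_j` up to `1/2` and increases after it.
-/

open Real

/-- binary Shannon entropy (base 2) -/
noncomputable def H2 (p : ℝ) : ℝ := -(p * Real.logb 2 p) - (1 - p) * Real.logb 2 (1 - p)

/-- the qubit coherence function `C(pₓ,p_y,p_z) = H(p_z) - H((p_o+1)/2)` -/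
noncomputable def Cfun (px py pz : ℝ) : ℝ :=
  H2 pz - H2 ((Real.sqrt (4*(px^2 + py^2 + pz^2 - px - py - pz) + 3) + 1) / 2)

/-- admissibility: the Bloch vector `(2pₓ-1, 2p_y-1, 2p_z-1)` lies in the Bloch ball -/
def Adm (px py pz : ℝ) : Prop :=
  (2*px - 1)^2 + (2*py - 1)^2 + (2*pz - 1)^2 ≤ 1

open Set

noncomputable def logRatio (t : ℝ) : ℝ := log (1 + t) - log (1 - t)

lemma logRatio_zero : logRatio 0 = 0 := by simp [logRatio]

lemma hasDerivAt_logRatio {t : ℝ} (h₁ : -1 < t) (h₂ : t < 1) :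
    HasDerivAt logRatio (2 / (1 - t ^ 2)) t := by
  have h := (((hasDerivAt_id' t).const_add 1).log (by linarith)).sub
    (((hasDerivAt_id' t).const_sub 1).log (by linarith))
  refine h.congr_deriv ?_
  have : (1 : ℝ) + t ≠ 0 := by linarith
  have : (1 : ℝ) - t ≠ 0 := by linarith
  have : (1 : ℝ) - t ^ 2 ≠ 0 := by nlinarith
  field_simp
  ring

lemma convexOn_logRatio : ConvexOn ℝ (Ico 0 1) logRatio := by
  have hderiv {t : ℝ} (ht : t ∈ Ioo 0 1) := hasDerivAt_logRatio (by linarith [ht.1]) ht.2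
  apply MonotoneOn.convexOn_of_deriv (convex_Ico 0 1)
  · exact fun t ht =>
      (hasDerivAt_logRatio (by linarith [ht.1]) ht.2).continuousAt.continuousWithinAt
  · rw [interior_Ico]
    exact fun t ht => (hderiv ht).differentiableAt.differentiableWithinAt
  · rw [interior_Ico]
    intro a ha b hb hab
    rw [(hderiv ha).deriv, (hderiv hb).deriv]
    have : 0 < 1 - b ^ 2 := by nlinarith [hb.1, hb.2]
    gcongr
    exact ha.1.le

lemma monotoneOn_logRatio_div : MonotoneOn (fun t => logRatio t / t) (Ioo 0 1) := by
  have h := (convexOn_logRatio.monotoneOn_slope_gt (x := 0) ⟨le_rfl, one_pos⟩).mono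
    fun t ht => ⟨Ioo_subset_Ico_self ht, ht.1⟩
  have hslope : slope logRatio 0 = fun t => logRatio t / t := by
    ext t
    simp [slope_def_field, logRatio_zero]
  rw [hslope] at h
  exact h

lemma hasDerivAt_binEntropy_one_add_div_two {t : ℝ} (h₁ : -1 < t) (h₂ : t < 1) :
    HasDerivAt (fun t => binEntropy ((1 + t) / 2)) (-logRatio t / 2) t := by
  have h := (hasDerivAt_binEntropy (p := (1 + t) / 2) (by linarith) (by linarith)).comp t
    (((hasDerivAt_id' t).const_add 1).div_const 2)
  refine h.congr_deriv ?_
  rw [show 1 - (1 + t) / 2 = (1 - t) / 2 by ring, log_div (by linarith) two_ne_zero,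
    log_div (by linarith) two_ne_zero, logRatio]
  ring

-- The von Neumann entropy, in nats, of a qubit whose Bloch vector has squared length `s`.
noncomputable def radialEntropy (s : ℝ) : ℝ := binEntropy ((1 + √s) / 2)

lemma radialEntropy_sq_two_mul_sub_one (p : ℝ) :
    radialEntropy ((2 * p - 1) ^ 2) = binEntropy p := by
  rw [radialEntropy, sqrt_sq_eq_abs]
  rcases le_total 0 (2 * p - 1) with h | h
  · rw [abs_of_nonneg h]; congr 1; ring
  · rw [abs_of_nonpos h, ← binEntropy_one_sub]; congr 1; ring

lemma continuous_radialEntropy : Continuous radialEntropy := by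
  unfold radialEntropy; fun_prop

lemma hasDerivAt_radialEntropy {s : ℝ} (h₀ : 0 < s) (h₁ : s < 1) :
    HasDerivAt radialEntropy (-(logRatio √s / √s) / 4) s := by
  have hs₀ : 0 < √s := sqrt_pos.2 h₀
  have hs₁ : √s < 1 := (sqrt_lt' one_pos).2 (by simpa using h₁)
  refine ((hasDerivAt_binEntropy_one_add_div_two (by linarith) hs₁).comp s
    (hasDerivAt_sqrt h₀.ne')).congr_deriv ?_
  field_simp
  ring

lemma concaveOn_radialEntropy : ConcaveOn ℝ (Icc 0 1) radialEntropy := by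
  have hderiv {s : ℝ} (hs : s ∈ Ioo 0 1) := hasDerivAt_radialEntropy hs.1 hs.2
  apply AntitoneOn.concaveOn_of_deriv (convex_Icc 0 1) continuous_radialEntropy.continuousOn
  · rw [interior_Icc]
    exact fun s hs => (hderiv hs).differentiableAt.differentiableWithinAt
  · rw [interior_Icc]
    intro a ha b hb hab
    rw [(hderiv ha).deriv, (hderiv hb).deriv]
    have hsqrt {s : ℝ} (hs : s ∈ Ioo 0 1) : √s ∈ Ioo 0 1 :=
      ⟨sqrt_pos.2 hs.1, (sqrt_lt' one_pos).2 (by simpa using hs.2)⟩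
    have := monotoneOn_logRatio_div (hsqrt ha) (hsqrt hb) (sqrt_le_sqrt hab)
    linarith

lemma antitoneOn_radialEntropy : AntitoneOn radialEntropy (Icc 0 1) := by
  intro a ha b hb hab
  have hsqrt {s : ℝ} (hs : s ∈ Icc 0 1) : (1 + √s) / 2 ∈ Icc 2⁻¹ 1 := by
    have := sqrt_le_one.2 hs.2
    constructor <;> linarith [sqrt_nonneg s]
  exact binEntropy_strictAntiOn.antitoneOn (hsqrt ha) (hsqrt hb) (by gcongr)

lemma ConcaveOn.map_add_sub_map_le {S : Set ℝ} {f : ℝ → ℝ} (hf : ConcaveOn ℝ S f)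
    {a x y : ℝ} (ha : 0 ≤ a) (hxy : x ≤ y) (hx : x ∈ S) (hy : y + a ∈ S) :
    f (y + a) - f y ≤ f (x + a) - f x := by
  rcases (le_add_of_le_of_nonneg hxy ha).eq_or_lt with h | h
  · obtain rfl : a = 0 := by linarith
    obtain rfl : x = y := by linarith
    exact le_rfl
  -- `y` and `x + a` are the two convex combinations of the endpoints `x` and `y + a`
  -- with weights `(θ, 1 - θ)` and `(1 - θ, θ)`, where `θ = a / (y + a - x)`.
  have hd : 0 < y + a - x := by linarith
  have hθ₀ : 0 ≤ a / (y + a - x) := div_nonneg ha hd.le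
  have hθ₁ : 0 ≤ 1 - a / (y + a - x) := by
    rw [sub_nonneg, div_le_one hd]; linarith
  have h₁ := hf.2 hx hy hθ₀ hθ₁ (by ring)
  have h₂ := hf.2 hx hy hθ₁ hθ₀ (by ring)
  simp only [smul_eq_mul] at h₁ h₂
  have e₁ : a / (y + a - x) * x + (1 - a / (y + a - x)) * (y + a) = y := by
    field_simp; ring
  have e₂ : (1 - a / (y + a - x)) * x + a / (y + a - x) * (y + a) = x + a := by
    field_simp; ring
  rw [e₁] at h₁
  rw [e₂] at h₂
  linarith

lemma ConcaveOn.monotoneOn_sub_map_add {S : Set ℝ} {f : ℝ → ℝ} (hf : ConcaveOn ℝ S f)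
    {a : ℝ} (ha : 0 ≤ a) : MonotoneOn (fun x => f x - f (x + a)) {x | x ∈ S ∧ x + a ∈ S} :=
  fun x hx y hy hxy => by
    have := hf.map_add_sub_map_le ha hxy hx.1 hy.2
    dsimp only
    linarith

lemma H2_eq_binEntropy_div (p : ℝ) : H2 p = binEntropy p / log 2 := by
  simp only [H2, binEntropy, logb, log_inv]
  ring

-- `coherenceSq (r_z ^ 2) (‖r‖ ^ 2)` is the relative entropy of coherence, in bits, of the qubit with
-- Bloch vector `r`.
noncomputable def coherenceSq (sz s : ℝ) : ℝ := (radialEntropy sz - radialEntropy s) / log 2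

lemma Cfun_eq_coherenceSq (px py pz : ℝ) :
    Cfun px py pz = coherenceSq ((2 * pz - 1) ^ 2)
      ((2 * px - 1) ^ 2 + (2 * py - 1) ^ 2 + (2 * pz - 1) ^ 2) := by
  have hsum : 4 * (px ^ 2 + py ^ 2 + pz ^ 2 - px - py - pz) + 3 =
      (2 * px - 1) ^ 2 + (2 * py - 1) ^ 2 + (2 * pz - 1) ^ 2 := by ring
  rw [Cfun, H2_eq_binEntropy_div, H2_eq_binEntropy_div, ← radialEntropy_sq_two_mul_sub_one,
    ← sub_div, hsum, add_comm (√_) 1]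
  rfl

lemma monotoneOn_coherenceSq_add (sz : ℝ) {a : ℝ} (ha : 0 ≤ a) :
    MonotoneOn (fun s => coherenceSq sz (s + a)) (Icc 0 (1 - a)) :=
  fun s hs t ht hst => by
    have hmem {u : ℝ} (hu : u ∈ Icc 0 (1 - a)) : u + a ∈ Icc 0 1 :=
      ⟨by linarith [hu.1], by linarith [hu.2]⟩
    exact div_le_div_of_nonneg_right
      (sub_le_sub_left (antitoneOn_radialEntropy (hmem hs) (hmem ht) (by linarith)) _)
      (log_nonneg one_le_two)

lemma monotoneOn_coherenceSq_diag {a : ℝ} (ha : 0 ≤ a) :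
    MonotoneOn (fun s => coherenceSq s (s + a)) (Icc 0 (1 - a)) :=
  fun s hs t ht hst => by
    have hmem {u : ℝ} (hu : u ∈ Icc 0 (1 - a)) : u ∈ {x | x ∈ Icc 0 1 ∧ x + a ∈ Icc 0 1} :=
      ⟨⟨hu.1, by linarith [hu.2]⟩, ⟨by linarith [hu.1], by linarith [hu.2]⟩⟩
    exact div_le_div_of_nonneg_right
      (concaveOn_radialEntropy.monotoneOn_sub_map_add ha (hmem hs) (hmem ht) hst)
      (log_nonneg one_le_two)

lemma antitoneOn_monotoneOn_of_eq_comp_sq {f G : ℝ → ℝ} {b : ℝ} {A : ℝ → Prop}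
    (hG : MonotoneOn G (Icc 0 b)) (hf : ∀ p, f p = G ((2 * p - 1) ^ 2))
    (hA : ∀ p, A p → (2 * p - 1) ^ 2 ≤ b) :
    AntitoneOn f {p | A p ∧ p ≤ 1 / 2} ∧ MonotoneOn f {p | A p ∧ 1 / 2 ≤ p} := by
  have hmem {p : ℝ} (hp : A p) : (2 * p - 1) ^ 2 ∈ Icc 0 b := ⟨sq_nonneg _, hA p hp⟩
  refine ⟨fun p hp q hq hpq => ?_, fun p hp q hq hpq => ?_⟩ <;> rw [hf, hf]
  · exact hG (hmem hq.1) (hmem hp.1) (by nlinarith [hp.2, hq.2])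
  · exact hG (hmem hp.1) (hmem hq.1) (by nlinarith [hp.2, hq.2])

lemma le_of_antitoneOn_monotoneOn {f : ℝ → ℝ} {A : ℝ → Prop} {c : ℝ}
    (hf : AntitoneOn f {p | A p ∧ p ≤ c} ∧ MonotoneOn f {p | A p ∧ c ≤ p})
    (hc : A c) {p : ℝ} (hp : A p) : f c ≤ f p := by
  rcases le_total p c with h | h
  · exact hf.1 ⟨hp, h⟩ ⟨hc, le_rfl⟩ h
  · exact hf.2 ⟨hc, le_rfl⟩ ⟨hp, h⟩ h

lemma antitoneOn_monotoneOn_Cfun_px (py pz : ℝ) :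
    AntitoneOn (fun px => Cfun px py pz) {px | Adm px py pz ∧ px ≤ 1 / 2} ∧
      MonotoneOn (fun px => Cfun px py pz) {px | Adm px py pz ∧ 1 / 2 ≤ px} := by
  refine antitoneOn_monotoneOn_of_eq_comp_sq
    (monotoneOn_coherenceSq_add ((2 * pz - 1) ^ 2)
      (a := (2 * py - 1) ^ 2 + (2 * pz - 1) ^ 2) (by positivity)) (fun p => ?_) (fun p hp => ?_)
  · rw [Cfun_eq_coherenceSq]; congr 1; ring
  · unfold Adm at hp; linarith

lemma antitoneOn_monotoneOn_Cfun_py (px pz : ℝ) :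
    AntitoneOn (fun py => Cfun px py pz) {py | Adm px py pz ∧ py ≤ 1 / 2} ∧
      MonotoneOn (fun py => Cfun px py pz) {py | Adm px py pz ∧ 1 / 2 ≤ py} := by
  refine antitoneOn_monotoneOn_of_eq_comp_sq
    (monotoneOn_coherenceSq_add ((2 * pz - 1) ^ 2)
      (a := (2 * px - 1) ^ 2 + (2 * pz - 1) ^ 2) (by positivity)) (fun p => ?_) (fun p hp => ?_)
  · rw [Cfun_eq_coherenceSq]; congr 1; ring
  · unfold Adm at hp; linarith

lemma antitoneOn_monotoneOn_Cfun_pz (px py : ℝ) :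
    AntitoneOn (fun pz => Cfun px py pz) {pz | Adm px py pz ∧ pz ≤ 1 / 2} ∧
      MonotoneOn (fun pz => Cfun px py pz) {pz | Adm px py pz ∧ 1 / 2 ≤ pz} := by
  refine antitoneOn_monotoneOn_of_eq_comp_sq
    (monotoneOn_coherenceSq_diag (a := (2 * px - 1) ^ 2 + (2 * py - 1) ^ 2) (by positivity))
    (fun p => ?_) (fun p hp => ?_)
  · rw [Cfun_eq_coherenceSq]; congr 1; ring
  · unfold Adm at hp; linarith

/-- in each coordinate (the other two fixed), `C` is nonincreasing
on the admissible region where that coordinate is `≤ 1/2` and nondecreasing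
where it is `≥ 1/2`; in particular its minimum over an admissible coordinate is
attained at `1/2`. -/
theorem stmt4 :
    (∀ py pz : ℝ,
      AntitoneOn (fun px => Cfun px py pz) {px | Adm px py pz ∧ px ≤ 1/2} ∧
      MonotoneOn (fun px => Cfun px py pz) {px | Adm px py pz ∧ 1/2 ≤ px}) ∧
    (∀ px pz : ℝ,
      AntitoneOn (fun py => Cfun px py pz) {py | Adm px py pz ∧ py ≤ 1/2} ∧
      MonotoneOn (fun py => Cfun px py pz) {py | Adm px py pz ∧ 1/2 ≤ py}) ∧
    (∀ px py : ℝ,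
      AntitoneOn (fun pz => Cfun px py pz) {pz | Adm px py pz ∧ pz ≤ 1/2} ∧
      MonotoneOn (fun pz => Cfun px py pz) {pz | Adm px py pz ∧ 1/2 ≤ pz}) ∧
    (∀ px py pz : ℝ, Adm px py pz →
      Cfun (1/2) py pz ≤ Cfun px py pz ∧
      Cfun px (1/2) pz ≤ Cfun px py pz ∧
      Cfun px py (1/2) ≤ Cfun px py pz) := by
  refine ⟨antitoneOn_monotoneOn_Cfun_px, antitoneOn_monotoneOn_Cfun_py,
    antitoneOn_monotoneOn_Cfun_pz, fun px py pz h => ⟨?_, ?_, ?_⟩⟩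
  · refine le_of_antitoneOn_monotoneOn (antitoneOn_monotoneOn_Cfun_px py pz) ?_ h
    unfold Adm at h ⊢
    nlinarith [sq_nonneg (2 * px - 1)]
  · refine le_of_antitoneOn_monotoneOn (antitoneOn_monotoneOn_Cfun_py px pz) ?_ h
    unfold Adm at h ⊢
    nlinarith [sq_nonneg (2 * py - 1)]
  · refine le_of_antitoneOn_monotoneOn (antitoneOn_monotoneOn_Cfun_pz px py) ?_ h
    unfold Adm at h ⊢
    nlinarith [sq_nonneg (2 * pz - 1)]
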